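/- Let Ω ⊆ ℝ^d be a nonempty bounded open set, μ > 0, and let K : closure(Ω) × closure(Ω) → ℝ be continuous, satisfy ∫_Ω K(x,y) dy = 1 for every x ∈ Ω, and satisfy ∬_{Ω×Ω} K(x,y) f(x) f(y) dx dy ≥ 0 for every f ∈ L²(Ω). Let u : (0,∞) × closure(Ω) → ℝ be continuous, positive, with continuous time derivative, twice continuously differentiable in x on Ω, satisfying ∂_t u = μ (1 − ∫_Ω K(x,y) u(t,y) dy) u + Δu on (0,∞) × Ω and, for every t > 0, ∫_Ω Δ_x u(t,x)(1 − 1/u(t,x)) dx = −∫_Ω ‖∇_x u(t,x)‖²/u(t,x)² dx. Define the dissipation D(t) := ∫_Ω ‖∇_x u(t,x)‖²/u(t,x)² dx + μ ∬_{Ω×Ω} K(x,y)(1 − u(t,x))(1 − u(t,y)) dx dy. Then for all 0 < t₀ ≤ t₁, ∫_{t₀}^{t₁} D(s) ds ≤ ∫_Ω (u(t₀,x) − 1 − log u(t₀,x)) dx; in particular, the total dissipation ∫_{t₀}^{∞} D(s) ds is finite whenever ∫_Ω (u(t₀,x) − 1 − log u(t₀,x)) dx is finite. -/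

import Mathlib

/-!
Along a positive solution, `V(t) = ∫_Ω (u - 1 - log u)` is differentiable with
`V' = ∫_Ω ∂ₜu (1 - 1/u)`. Substituting the equation, the diffusion term contributes
`-∫_Ω ‖∇u‖²/u²` by the Neumann identity, and since `∫_Ω K(x,·) = 1` the reaction term is
`μ ∫_Ω (1 - K u)(u - 1) = -μ ∬ K (1 - u)(1 - u)`; hence `V' = -D`. As `V ≥ 0`, the fundamental
theorem of calculus bounds `∫_{t₀}^{t₁} D` by `V(t₀)` uniformly in `t₁`, and `D ≥ 0` lets the
bound pass to `[t₀, ∞)`.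
-/

open MeasureTheory Filter

noncomputable def laplacian {d : ℕ} (u : EuclideanSpace ℝ (Fin d) → ℝ)
    (x : EuclideanSpace ℝ (Fin d)) : ℝ :=
  ∑ i : Fin d,
    fderiv ℝ (fun y => fderiv ℝ u y (EuclideanSpace.single i 1)) x (EuclideanSpace.single i 1)

open Set

theorem ContinuousOn.sub_one_sub_log {X : Type*} [TopologicalSpace X] {f : X → ℝ} {s : Set X}
    (hf : ContinuousOn f s) (h0 : ∀ x ∈ s, f x ≠ 0) :
    ContinuousOn (fun x => f x - 1 - Real.log (f x)) s :=
  (hf.sub continuousOn_const).sub (hf.log h0)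

theorem HasDerivAt.sub_one_sub_log {f : ℝ → ℝ} {f' t : ℝ} (hf : HasDerivAt f f' t)
    (h0 : f t ≠ 0) : HasDerivAt (fun s => f s - 1 - Real.log (f s)) (f' * (1 - 1 / f t)) t :=
  ((hf.sub_const 1).sub (hf.log h0)).congr_deriv (by ring)

section CompactDomination

variable {X E : Type*} [TopologicalSpace X] [MeasurableSpace X] [OpensMeasurableSpace X]
  {μ : Measure X} [IsFiniteMeasureOnCompacts μ] [NormedAddCommGroup E] {C Ω : Set X}

theorem ContinuousOn.memLp_restrict_of_subset_isCompact {f : X → E} (hf : ContinuousOn f C)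
    (hC : IsCompact C) (hΩ : MeasurableSet Ω) (hΩC : Ω ⊆ C) (p : ENNReal) :
    MemLp f p (μ.restrict Ω) := by
  have : IsFiniteMeasure (μ.restrict Ω) :=
    isFiniteMeasure_restrict.2 (measure_lt_top_of_subset hΩC hC.measure_ne_top).ne
  obtain ⟨M, hM⟩ := hC.exists_bound_of_continuousOn hf
  exact .of_bound (hf.aestronglyMeasurable_of_subset_isCompact hC hΩ hΩC) M
    (ae_restrict_of_forall_mem hΩ fun x hx => hM x (hΩC hx))

variable [NormedSpace ℝ E]

theorem continuousOn_setIntegral_of_continuousOn_prod {P : Type*} [TopologicalSpace P]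
    [FirstCountableTopology P] {f : P → X → E} {U : Set P} (hU : IsCompact U)
    (hC : IsCompact C) (hΩ : MeasurableSet Ω) (hΩC : Ω ⊆ C)
    (hf : ContinuousOn (fun q : P × X => f q.1 q.2) (U ×ˢ C)) :
    ContinuousOn (fun p => ∫ x in Ω, f p x ∂μ) U := by
  obtain ⟨M, hM⟩ := (hU.prod hC).exists_bound_of_continuousOn hf
  refine continuousOn_of_dominated (bound := fun _ => M) (fun p hp => ?_) (fun p hp => ?_)
    (integrableOn_const (measure_lt_top_of_subset hΩC hC.measure_ne_top).ne) ?_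
  · exact (hf.uncurry_left p hp).aestronglyMeasurable_of_subset_isCompact hC hΩ hΩC
  · exact ae_restrict_of_forall_mem hΩ fun x hx => hM (p, x) ⟨hp, hΩC hx⟩
  · exact ae_restrict_of_forall_mem hΩ fun x hx => hf.uncurry_right x (hΩC hx)

theorem hasDerivAt_setIntegral_of_continuousOn_prod {F F' : ℝ → X → E} {a b t : ℝ}
    (hC : IsCompact C) (hΩ : MeasurableSet Ω) (hΩC : Ω ⊆ C) (ht : t ∈ Ioo a b)
    (hF : ∀ s ∈ Ioo a b, ContinuousOn (F s) C)
    (hF' : ContinuousOn (fun q : ℝ × X => F' q.1 q.2) (Icc a b ×ˢ C))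
    (hderiv : ∀ s ∈ Ioo a b, ∀ x ∈ C, HasDerivAt (F · x) (F' s x) s) :
    HasDerivAt (fun s => ∫ x in Ω, F s x ∂μ) (∫ x in Ω, F' t x ∂μ) t := by
  have hΩfin : μ Ω ≠ ⊤ := (measure_lt_top_of_subset hΩC hC.measure_ne_top).ne
  obtain ⟨M, hM⟩ := (isCompact_Icc.prod hC).exists_bound_of_continuousOn hF'
  refine (hasDerivAt_integral_of_dominated_loc_of_deriv_le (bound := fun _ => M)
    (Ioo_mem_nhds ht.1 ht.2) ?_ ?_ ?_ ?_ (integrableOn_const hΩfin) ?_).2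
  · filter_upwards [Ioo_mem_nhds ht.1 ht.2] with s hs
    exact (hF s hs).aestronglyMeasurable_of_subset_isCompact hC hΩ hΩC
  · exact (hF t ht).integrableOn_of_subset_isCompact hC hΩ hΩC hΩfin
  · exact (hF'.uncurry_left t (Ioo_subset_Icc_self ht)).aestronglyMeasurable_of_subset_isCompact
      hC hΩ hΩC
  · exact ae_restrict_of_forall_mem hΩ fun x hx s hs =>
      hM (s, x) ⟨Ioo_subset_Icc_self hs, hΩC hx⟩
  · exact ae_restrict_of_forall_mem hΩ fun x hx s hs => hderiv s hs x (hΩC hx)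

end CompactDomination

theorem integral_mul_one_sub_of_integral_eq_one {Y : Type*} [MeasurableSpace Y] {ν : Measure Y}
    {k v : Y → ℝ} (hk : Integrable k ν) (hkv : Integrable (fun y => k y * v y) ν)
    (hk1 : ∫ y, k y ∂ν = 1) : ∫ y, k y * (1 - v y) ∂ν = 1 - ∫ y, k y * v y ∂ν := by
  simp_rw [mul_one_sub]
  rw [integral_sub hk hkv, hk1]

theorem lintegral_Ioc_ofReal_le_of_hasDerivAt_neg {V D : ℝ → ℝ} {a b : ℝ} (hab : a ≤ b)
    (hV : ∀ s ∈ Icc a b, HasDerivAt V (-D s) s) (hD : IntervalIntegrable D volume a b)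
    (hD_nonneg : ∀ s ∈ Ioc a b, 0 ≤ D s) (hVb : 0 ≤ V b) :
    ∫⁻ s in Ioc a b, ENNReal.ofReal (D s) ≤ ENNReal.ofReal (V a) := by
  have hFTC : ∫ s in a..b, D s = V a - V b := by
    have := intervalIntegral.integral_eq_sub_of_hasDerivAt (by rwa [uIcc_of_le hab]) hD.neg
    rw [Pi.neg_def, intervalIntegral.integral_neg] at this
    linarith
  rw [← ofReal_integral_eq_lintegral_ofReal hD.1 (ae_restrict_of_forall_mem measurableSet_Ioc
    hD_nonneg), ← intervalIntegral.integral_of_le hab, hFTC]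
  exact ENNReal.ofReal_le_ofReal (by linarith)

theorem setLIntegral_Ici_le_of_forall_Ioc_le {μ : Measure ℝ} [NullSingletonClass μ]
    {f : ℝ → ENNReal} {a : ℝ} {c : ENNReal} (h : ∀ b, a ≤ b → ∫⁻ s in Ioc a b, f s ∂μ ≤ c) :
    ∫⁻ s in Ici a, f s ∂μ ≤ c := by
  have hIoi : ⋃ n : ℕ, Ioc a (a + n) = Ioi a := iUnion_Ioc_eq_Ioi_self_iff.2 fun x _ =>
    let ⟨n, hn⟩ := exists_nat_ge (x - a); ⟨n, by linarith⟩
  rw [setLIntegral_congr Ioi_ae_eq_Ici.symm, ← hIoi, setLIntegral_iUnion_of_directed]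
  · exact iSup_le fun n => h _ (le_add_of_nonneg_right n.cast_nonneg)
  · exact Monotone.directed_le fun m n hmn => Ioc_subset_Ioc_right (by gcongr)

section LyapunovFunctional

variable {X : Type*} [TopologicalSpace X] [MeasurableSpace X]
  [OpensMeasurableSpace X] {μ : Measure X} [IsFiniteMeasureOnCompacts μ] {C Ω : Set X}

theorem hasDerivAt_setIntegral_sub_one_sub_log {u ut : ℝ → X → ℝ} {t : ℝ} (ht : 0 < t)
    (hC : IsCompact C) (hΩ : MeasurableSet Ω) (hΩC : Ω ⊆ C)
    (hu : ContinuousOn (fun p : ℝ × X => u p.1 p.2) (Ioi 0 ×ˢ C))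
    (hu0 : ∀ s > (0 : ℝ), ∀ x ∈ C, u s x ≠ 0)
    (hut : ∀ s > (0 : ℝ), ∀ x ∈ C, HasDerivAt (u · x) (ut s x) s)
    (hut_cont : ContinuousOn (fun p : ℝ × X => ut p.1 p.2) (Ioi 0 ×ˢ C)) :
    HasDerivAt (fun s => ∫ x in Ω, (u s x - 1 - Real.log (u s x)) ∂μ)
      (∫ x in Ω, ut t x * (1 - 1 / u t x) ∂μ) t := by
  have hslab : Icc (t / 2) (2 * t) ⊆ Ioi 0 := fun s hs => (half_pos ht).trans_le hs.1
  have hpos : ∀ s ∈ Ioo (t / 2) (2 * t), 0 < s := fun s hs => hslab (Ioo_subset_Icc_self hs)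
  refine hasDerivAt_setIntegral_of_continuousOn_prod hC hΩ hΩC ⟨by linarith, by linarith⟩
    (fun s hs => (hu.uncurry_left s (hpos s hs)).sub_one_sub_log (hu0 s (hpos s hs))) ?_
    (fun s hs x hx => (hut s (hpos s hs) x hx).sub_one_sub_log (hu0 s (hpos s hs) x hx))
  exact (hut_cont.mul (continuousOn_const.sub (continuousOn_const.div hu
    fun p hp => hu0 p.1 hp.1 p.2 hp.2))).mono (prod_mono hslab subset_rfl)

theorem lintegral_Ioc_le_lintegral_sub_one_sub_log {u ut : ℝ → X → ℝ} {D : ℝ → ℝ}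
    {t₀ b : ℝ} (ht₀ : 0 < t₀) (hb : t₀ ≤ b) (hC : IsCompact C) (hΩ : MeasurableSet Ω)
    (hΩC : Ω ⊆ C) (hu : ContinuousOn (fun p : ℝ × X => u p.1 p.2) (Ioi 0 ×ˢ C))
    (hu_pos : ∀ s > (0 : ℝ), ∀ x ∈ C, 0 < u s x)
    (hut : ∀ s > (0 : ℝ), ∀ x ∈ C, HasDerivAt (u · x) (ut s x) s)
    (hut_cont : ContinuousOn (fun p : ℝ × X => ut p.1 p.2) (Ioi 0 ×ˢ C))
    (hrate : ∀ s > (0 : ℝ), ∫ x in Ω, ut s x * (1 - 1 / u s x) ∂μ = -D s)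
    (hD_nonneg : ∀ s > (0 : ℝ), 0 ≤ D s) :
    ∫⁻ s in Ioc t₀ b, ENNReal.ofReal (D s)
      ≤ ∫⁻ x in Ω, ENNReal.ofReal (u t₀ x - 1 - Real.log (u t₀ x)) ∂μ := by
  have hu_ne : ∀ s > (0 : ℝ), ∀ x ∈ C, u s x ≠ 0 := fun s hs x hx => (hu_pos s hs x hx).ne'
  have hV_nonneg : ∀ s > (0 : ℝ), ∀ x ∈ Ω, 0 ≤ u s x - 1 - Real.log (u s x) :=
    fun s hs x hx => sub_nonneg.2 (Real.log_le_sub_one_of_pos (hu_pos s hs x (hΩC hx)))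
  have hslab : Icc t₀ b ⊆ Ioi 0 := fun s hs => ht₀.trans_le hs.1
  have hD_cont : ContinuousOn D (Icc t₀ b) := by
    refine ContinuousOn.congr ?_ fun s hs => (neg_eq_iff_eq_neg.2 (hrate s (hslab hs))).symm
    refine (continuousOn_setIntegral_of_continuousOn_prod isCompact_Icc hC hΩ hΩC ?_).neg
    exact (hut_cont.mul (continuousOn_const.sub (continuousOn_const.div hu
      fun p hp => hu_ne p.1 hp.1 p.2 hp.2))).mono (prod_mono hslab subset_rfl)
  rw [← ofReal_integral_eq_lintegral_ofReal
    (((hu.uncurry_left t₀ ht₀).sub_one_sub_log (hu_ne t₀ ht₀)).integrableOn_of_subset_isCompact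
      hC hΩ hΩC (measure_lt_top_of_subset hΩC hC.measure_ne_top).ne)
    (ae_restrict_of_forall_mem hΩ (hV_nonneg t₀ ht₀))]
  refine lintegral_Ioc_ofReal_le_of_hasDerivAt_neg
    (V := fun s => ∫ x in Ω, (u s x - 1 - Real.log (u s x)) ∂μ) hb (fun s hs => ?_)
    (hD_cont.intervalIntegrable_of_Icc hb)
    (fun s hs => hD_nonneg s (hslab (Ioc_subset_Icc_self hs)))
    (setIntegral_nonneg hΩ (hV_nonneg b (hslab (right_mem_Icc.2 hb))))
  rw [← hrate s (hslab hs)]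
  exact hasDerivAt_setIntegral_sub_one_sub_log (hslab hs) hC hΩ hΩC hu hu_ne hut hut_cont

theorem setIntegral_mul_one_sub_inv_eq_neg_dissipation [FirstCountableTopology X] (r : ℝ)
    {K : X → X → ℝ} {v w L : X → ℝ} {G : ℝ} (hC : IsCompact C) (hΩ : MeasurableSet Ω) (hΩC : Ω ⊆ C)
    (hK : ContinuousOn (fun p : X × X => K p.1 p.2) (C ×ˢ C))
    (hK1 : ∀ x ∈ Ω, ∫ y in Ω, K x y ∂μ = 1)
    (hv : ContinuousOn v C) (hv0 : ∀ x ∈ C, v x ≠ 0) (hw : ContinuousOn w C)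
    (heq : ∀ x ∈ Ω, w x = r * (1 - ∫ y in Ω, K x y * v y ∂μ) * v x + L x)
    (hL : ∫ x in Ω, L x * (1 - 1 / v x) ∂μ = -G) :
    ∫ x in Ω, w x * (1 - 1 / v x) ∂μ
      = -(G + r * ∫ x in Ω, ∫ y in Ω, K x y * (1 - v x) * (1 - v y) ∂μ ∂μ) := by
  have hΩfin : μ Ω ≠ ⊤ := (measure_lt_top_of_subset hΩC hC.measure_ne_top).ne
  set R : X → ℝ := fun x => r * (1 - ∫ y in Ω, K x y * v y ∂μ) * (v x - 1)
  have hKv : ContinuousOn (fun x => ∫ y in Ω, K x y * v y ∂μ) C :=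
    continuousOn_setIntegral_of_continuousOn_prod hC hC hΩ hΩC
      (hK.mul (hv.comp continuousOn_snd fun _ hp => hp.2))
  have hR_int : IntegrableOn R Ω μ :=
    ((continuousOn_const.mul (continuousOn_const.sub hKv)).mul
      (hv.sub continuousOn_const)).integrableOn_of_subset_isCompact hC hΩ hΩC hΩfin
  have hw_int : IntegrableOn (fun x => w x * (1 - 1 / v x)) Ω μ :=
    (hw.mul (continuousOn_const.sub (continuousOn_const.div hv hv0)))
      |>.integrableOn_of_subset_isCompact hC hΩ hΩC hΩfin
  have hsplit : ∀ x ∈ Ω, w x * (1 - 1 / v x) = R x + L x * (1 - 1 / v x) := by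
    intro x hx
    rw [heq x hx]
    field_simp [hv0 x (hΩC hx)]
    ring
  have hL_int : IntegrableOn (fun x => L x * (1 - 1 / v x)) Ω μ :=
    (hw_int.sub hR_int).congr_fun (fun x hx => by simp only [Pi.sub_apply, hsplit x hx]; ring) hΩ
  have hR : ∀ x ∈ Ω, R x = -(r * ∫ y in Ω, K x y * (1 - v x) * (1 - v y) ∂μ) := by
    intro x hx
    have hKx := hK.uncurry_left x (hΩC hx)
    simp only [R]
    rw [← integral_mul_one_sub_of_integral_eq_one
      (hKx.integrableOn_of_subset_isCompact hC hΩ hΩC hΩfin)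
      ((hKx.mul hv).integrableOn_of_subset_isCompact hC hΩ hΩC hΩfin) (hK1 x hx)]
    simp_rw [mul_right_comm (K x _) (1 - v x), integral_mul_const]
    ring
  rw [setIntegral_congr_fun hΩ hsplit, integral_add hR_int hL_int, setIntegral_congr_fun hΩ hR,
    integral_neg, integral_const_mul, hL]
  ring

end LyapunovFunctional

theorem integrated_dissipation_bound_general
    {d : ℕ} (Ω : Set (EuclideanSpace ℝ (Fin d)))
    (hΩopen : IsOpen Ω) (hΩbdd : Bornology.IsBounded Ω)
    (μ : ℝ) (hμ : 0 < μ)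
    (K : EuclideanSpace ℝ (Fin d) → EuclideanSpace ℝ (Fin d) → ℝ)
    (hKcont : ContinuousOn (fun p : EuclideanSpace ℝ (Fin d) × EuclideanSpace ℝ (Fin d) =>
      K p.1 p.2) (closure Ω ×ˢ closure Ω))
    (hKnorm : ∀ x ∈ Ω, ∫ y in Ω, K x y = 1)
    (hKposdef : ∀ f : EuclideanSpace ℝ (Fin d) → ℝ, MemLp f 2 (volume.restrict Ω) →
      0 ≤ ∫ x in Ω, ∫ y in Ω, K x y * f x * f y)
    (u ut : ℝ → EuclideanSpace ℝ (Fin d) → ℝ)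
    (hu_cont : ContinuousOn (fun p : ℝ × EuclideanSpace ℝ (Fin d) => u p.1 p.2)
      (Set.Ioi 0 ×ˢ closure Ω))
    (hu_pos : ∀ t > (0 : ℝ), ∀ x ∈ closure Ω, 0 < u t x)
    (hut : ∀ t > (0 : ℝ), ∀ x ∈ closure Ω, HasDerivAt (fun s => u s x) (ut t x) t)
    (hut_cont : ContinuousOn (fun p : ℝ × EuclideanSpace ℝ (Fin d) => ut p.1 p.2)
      (Set.Ioi 0 ×ˢ closure Ω))
    (hPDE : ∀ t > (0 : ℝ), ∀ x ∈ Ω,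
      ut t x = μ * (1 - ∫ y in Ω, K x y * u t y) * u t x + laplacian (u t) x)
    (hNeumann : ∀ t > (0 : ℝ),
      ∫ x in Ω, laplacian (u t) x * (1 - 1 / u t x)
        = -∫ x in Ω, ‖gradient (u t) x‖ ^ 2 / (u t x) ^ 2)
    (D : ℝ → ℝ)
    (hD : ∀ t, D t = (∫ x in Ω, ‖gradient (u t) x‖ ^ 2 / (u t x) ^ 2)
      + μ * ∫ x in Ω, ∫ y in Ω, K x y * (1 - u t x) * (1 - u t y)) :
    ∀ t₀ t₁ : ℝ, 0 < t₀ → t₀ ≤ t₁ →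
      (∫⁻ s in Set.Ioc t₀ t₁, ENNReal.ofReal (D s)
          ≤ ∫⁻ x in Ω, ENNReal.ofReal (u t₀ x - 1 - Real.log (u t₀ x)))
      ∧ ((∫⁻ x in Ω, ENNReal.ofReal (u t₀ x - 1 - Real.log (u t₀ x))) < ⊤ →
          (∫⁻ s in Set.Ici t₀, ENNReal.ofReal (D s)) < ⊤) := by
  intro t₀ t₁ ht₀ ht₀₁
  have hC : IsCompact (closure Ω) := hΩbdd.isCompact_closure
  have hΩ : MeasurableSet Ω := hΩopen.measurableSet
  have hΩC : Ω ⊆ closure Ω := subset_closure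
  have hrate : ∀ t > (0 : ℝ), ∫ x in Ω, ut t x * (1 - 1 / u t x) = -D t := fun t ht => by
    rw [hD t]
    exact setIntegral_mul_one_sub_inv_eq_neg_dissipation μ hC hΩ hΩC hKcont hKnorm
      (hu_cont.uncurry_left t ht) (fun x hx => (hu_pos t ht x hx).ne')
      (hut_cont.uncurry_left t ht) (hPDE t ht) (hNeumann t ht)
  have hD_nonneg : ∀ t > (0 : ℝ), 0 ≤ D t := fun t ht => by
    rw [hD t]
    refine add_nonneg (integral_nonneg fun x => by positivity) (mul_nonneg hμ.le (hKposdef _ ?_))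
    exact (continuousOn_const.sub (hu_cont.uncurry_left t ht)).memLp_restrict_of_subset_isCompact
      hC hΩ hΩC 2
  have hbound : ∀ b, t₀ ≤ b → ∫⁻ s in Ioc t₀ b, ENNReal.ofReal (D s)
      ≤ ∫⁻ x in Ω, ENNReal.ofReal (u t₀ x - 1 - Real.log (u t₀ x)) := fun b hb =>
    lintegral_Ioc_le_lintegral_sub_one_sub_log ht₀ hb hC hΩ hΩC hu_cont hu_pos hut
      hut_cont hrate hD_nonneg
  exact ⟨hbound t₁ ht₀₁, (setLIntegral_Ici_le_of_forall_Ioc_le hbound).trans_lt⟩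

/-- Integrated dissipation bound: the time integral of the dissipation `D` on `[t₀, t₁]`
is bounded by the value of the Lyapunov functional at time `t₀`; in particular the total
dissipation on `[t₀, ∞)` is finite whenever the Lyapunov functional at `t₀` is finite.
The possibly-infinite integrals of the nonnegative quantities are taken as `lintegral`s. -/
theorem integrated_dissipation_bound
    {d : ℕ} (Ω : Set (EuclideanSpace ℝ (Fin d)))
    (hΩopen : IsOpen Ω) (hΩbdd : Bornology.IsBounded Ω) (hΩne : Ω.Nonempty)
    (μ : ℝ) (hμ : 0 < μ)
    (K : EuclideanSpace ℝ (Fin d) → EuclideanSpace ℝ (Fin d) → ℝ)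
    (hKcont : ContinuousOn (fun p : EuclideanSpace ℝ (Fin d) × EuclideanSpace ℝ (Fin d) =>
      K p.1 p.2) (closure Ω ×ˢ closure Ω))
    (hKnorm : ∀ x ∈ Ω, ∫ y in Ω, K x y = 1)
    (hKposdef : ∀ f : EuclideanSpace ℝ (Fin d) → ℝ, MemLp f 2 (volume.restrict Ω) →
      0 ≤ ∫ x in Ω, ∫ y in Ω, K x y * f x * f y)
    (u ut : ℝ → EuclideanSpace ℝ (Fin d) → ℝ)
    (hu_cont : ContinuousOn (fun p : ℝ × EuclideanSpace ℝ (Fin d) => u p.1 p.2)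
      (Set.Ioi 0 ×ˢ closure Ω))
    (hu_pos : ∀ t > (0 : ℝ), ∀ x ∈ closure Ω, 0 < u t x)
    (hut : ∀ t > (0 : ℝ), ∀ x ∈ closure Ω, HasDerivAt (fun s => u s x) (ut t x) t)
    (hut_cont : ContinuousOn (fun p : ℝ × EuclideanSpace ℝ (Fin d) => ut p.1 p.2)
      (Set.Ioi 0 ×ˢ closure Ω))
    (hu_smooth : ∀ t > (0 : ℝ), ContDiffOn ℝ 2 (u t) Ω)
    (hPDE : ∀ t > (0 : ℝ), ∀ x ∈ Ω,
      ut t x = μ * (1 - ∫ y in Ω, K x y * u t y) * u t x + laplacian (u t) x)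
    (hNeumann : ∀ t > (0 : ℝ),
      ∫ x in Ω, laplacian (u t) x * (1 - 1 / u t x)
        = -∫ x in Ω, ‖gradient (u t) x‖ ^ 2 / (u t x) ^ 2)
    (D : ℝ → ℝ)
    (hD : ∀ t, D t = (∫ x in Ω, ‖gradient (u t) x‖ ^ 2 / (u t x) ^ 2)
      + μ * ∫ x in Ω, ∫ y in Ω, K x y * (1 - u t x) * (1 - u t y)) :
    ∀ t₀ t₁ : ℝ, 0 < t₀ → t₀ ≤ t₁ →
      (∫⁻ s in Set.Ioc t₀ t₁, ENNReal.ofReal (D s)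
          ≤ ∫⁻ x in Ω, ENNReal.ofReal (u t₀ x - 1 - Real.log (u t₀ x)))
      ∧ ((∫⁻ x in Ω, ENNReal.ofReal (u t₀ x - 1 - Real.log (u t₀ x))) < ⊤ →
          (∫⁻ s in Set.Ici t₀, ENNReal.ofReal (D s)) < ⊤) :=
  integrated_dissipation_bound_general Ω hΩopen hΩbdd μ hμ K hKcont hKnorm hKposdef u ut hu_cont
    hu_pos hut hut_cont hPDE hNeumann D hD
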